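/- Let K, L ⊆ ℝⁿ be compact sets and U ⊆ ℝⁿ a linear subspace. Then conv(K) ∩ conv(L) ∩ U = ∅ if and only if there exist a ∈ U and v, w ∈ U^⊥ such that ⟨a+v, x⟩ < ⟨a+w, y⟩ for all x ∈ K and y ∈ L. -/

import Mathlib

open scoped RealInnerProductSpace
open Module

/-! Apply Hahn–Banach in `E × E` to the compact convex set `conv K × conv L` (compact by
Carathéodory) and the closed subspace `{(u, u) | u ∈ U}`. The separating functional vanishes on
that subspace and is negative on the product; writing it as `(x, y) ↦ ⟪p, x⟫ + ⟪q, y⟫` gives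
`p + q ∈ Uᗮ`, and splitting `p = a + v` along `U ⊕ Uᗮ` forces `-q = a + w` with `w ∈ Uᗮ`.
Conversely, `⟪a + v, ·⟫` and `⟪a + w, ·⟫` both agree with `⟪a, ·⟫` on `U`, while the strict
inequality passes from `K`, `L` to their convex hulls. -/

section ConvexHull

variable {E : Type*} [AddCommGroup E] [Module ℝ E]

theorem forall_lt_of_mem_convexHull (φ ψ : E →ₗ[ℝ] ℝ) {s t : Set E}
    (h : ∀ x ∈ s, ∀ y ∈ t, φ x < ψ y) :
    ∀ x ∈ convexHull ℝ s, ∀ y ∈ convexHull ℝ t, φ x < ψ y := by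
  intro x hx y hy
  have hxt : ∀ y ∈ t, φ x < ψ y := fun y hy =>
    convexHull_min (fun x' hx' => h x' hx' y hy) (convex_halfSpace_lt φ.isLinear _) hx
  exact convexHull_min hxt (convex_halfSpace_gt ψ.isLinear _) hy

-- Carathéodory's theorem, with the number of points padded to `finrank ℝ E + 1` by zero weights.
theorem exists_fin_sum_smul_eq_of_mem_convexHull [FiniteDimensional ℝ E] {s : Set E} {x : E}
    (hx : x ∈ convexHull ℝ s) :
    ∃ w ∈ stdSimplex ℝ (Fin (finrank ℝ E + 1)), ∃ z : Fin (finrank ℝ E + 1) → E,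
      (∀ i, z i ∈ s) ∧ ∑ i, w i • z i = x := by
  classical
  obtain ⟨ι, _, z, w, hzs, hind, hw0, hw1, rfl⟩ := eq_pos_convex_span_of_mem_convexHull hx
  obtain ⟨g⟩ : Nonempty (ι ↪ Fin (finrank ℝ E + 1)) := by
    rw [Function.Embedding.nonempty_iff_card_le, Fintype.card_fin]
    exact hind.card_le_finrank_succ.trans (by gcongr; exact Submodule.finrank_le _)
  obtain ⟨i₀⟩ : Nonempty ι := by
    by_contra! hι
    simp at hw1
  set w' := Function.extend g w 0
  set z' := Function.extend g z fun _ => z i₀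
  have hw' : ∀ i ∉ Set.range g, w' i = 0 := fun i hi =>
    Function.extend_apply' _ _ _ (by simpa using hi)
  have hz' : ∀ i ∉ Set.range g, z' i = z i₀ := fun i hi =>
    Function.extend_apply' _ _ _ (by simpa using hi)
  have hsum : ∑ i, w' i • z' i = ∑ j, w j • z j :=
    (Fintype.sum_of_injective g g.injective _ _ (fun i hi => by rw [hw' i hi, zero_smul])
      (fun j => by simp only [w', z', g.injective.extend_apply])).symm
  have hwsum : ∑ i, w' i = ∑ j, w j :=
    (Fintype.sum_of_injective g g.injective w w' hw'
      fun j => (g.injective.extend_apply _ _ _).symm).symm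
  refine ⟨w', ⟨fun i => ?_, hwsum.trans hw1⟩, z', fun i => ?_, hsum⟩
  · by_cases hi : i ∈ Set.range g
    · obtain ⟨j, rfl⟩ := hi
      simpa [w', g.injective.extend_apply] using (hw0 j).le
    · exact (hw' i hi).ge
  · by_cases hi : i ∈ Set.range g
    · obtain ⟨j, rfl⟩ := hi
      simpa [z', g.injective.extend_apply] using hzs ⟨j, rfl⟩
    · exact hz' i hi ▸ hzs ⟨i₀, rfl⟩

theorem IsCompact.convexHull [TopologicalSpace E] [IsTopologicalAddGroup E] [ContinuousSMul ℝ E]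
    [FiniteDimensional ℝ E] {s : Set E} (hs : IsCompact s) : IsCompact (_root_.convexHull ℝ s) := by
  set N := finrank ℝ E + 1
  have hhull : _root_.convexHull ℝ s = (fun p : (Fin N → ℝ) × (Fin N → E) => ∑ i, p.1 i • p.2 i) ''
      (stdSimplex ℝ (Fin N) ×ˢ Set.univ.pi fun _ => s) := by
    ext x
    constructor
    · intro hx
      obtain ⟨w, hw, z, hz, rfl⟩ := exists_fin_sum_smul_eq_of_mem_convexHull hx
      exact ⟨(w, z), ⟨hw, fun i _ => hz i⟩, rfl⟩
    · rintro ⟨⟨w, z⟩, ⟨⟨hw0, hw1⟩, hz⟩, rfl⟩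
      exact (convex_convexHull ℝ s).sum_mem (fun i _ => hw0 i) hw1
        fun i _ => subset_convexHull ℝ s (hz i trivial)
  rw [hhull]
  exact ((isCompact_stdSimplex ℝ _).prod (isCompact_univ_pi fun _ => hs)).image (by fun_prop)

end ConvexHull

theorem geometric_hahn_banach_compact_submodule {F : Type*} [AddCommGroup F] [Module ℝ F]
    [TopologicalSpace F] [IsTopologicalAddGroup F] [ContinuousSMul ℝ F] [LocallyConvexSpace ℝ F]
    {C : Set F} (hC : Convex ℝ C) (hC' : IsCompact C) {V : Submodule ℝ F}
    (hV : IsClosed (V : Set F)) (disj : Disjoint C V) :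
    ∃ f : StrongDual ℝ F, (∀ z ∈ V, f z = 0) ∧ ∀ c ∈ C, f c < 0 := by
  obtain ⟨f, u, v, hfC, huv, hfV⟩ :=
    geometric_hahn_banach_compact_closed hC hC' V.convex hV disj
  -- A linear functional bounded below on a subspace vanishes on it.
  have hf0 : ∀ z ∈ V, f z = 0 := by
    intro z hz
    by_contra hne
    have := hfV _ (V.smul_mem ((v - 1) / f z) hz)
    rw [map_smul, smul_eq_mul, div_mul_cancel₀ _ hne] at this
    linarith
  have hv : v < 0 := by simpa using hfV 0 V.zero_mem
  exact ⟨f, hf0, fun c hc => by linarith [hfC c hc]⟩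

section InnerProductSpace

variable {E : Type*} [NormedAddCommGroup E] [InnerProductSpace ℝ E]

theorem exists_inner_add_inner_eq [CompleteSpace E] (f : StrongDual ℝ (E × E)) :
    ∃ p q : E, ∀ x y, f (x, y) = ⟪p, x⟫ + ⟪q, y⟫ := by
  refine ⟨(InnerProductSpace.toDual ℝ E).symm (f.comp (.inl ℝ E E)),
    (InnerProductSpace.toDual ℝ E).symm (f.comp (.inr ℝ E E)), fun x y => ?_⟩
  simp [InnerProductSpace.toDual_symm_apply, ← map_add]

theorem exists_add_eq_add_eq_neg_of_add_mem_orthogonal (U : Submodule ℝ E)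
    [U.HasOrthogonalProjection] {p q : E} (hpq : p + q ∈ Uᗮ) :
    ∃ a ∈ U, ∃ v ∈ Uᗮ, ∃ w ∈ Uᗮ, a + v = p ∧ a + w = -q := by
  have hv := U.sub_starProjection_mem_orthogonal p
  refine ⟨U.starProjection p, U.starProjection_apply_mem p, _, hv, _, Uᗮ.sub_mem hv hpq, ?_, ?_⟩
  <;> abel

theorem exists_inner_add_inner_neg_of_inter_eq_empty [CompleteSpace E] {A B : Set E}
    (hA : Convex ℝ A) (hA' : IsCompact A) (hB : Convex ℝ B) (hB' : IsCompact B)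
    (U : Submodule ℝ E) [U.HasOrthogonalProjection] (h : A ∩ B ∩ U = ∅) :
    ∃ p q : E, p + q ∈ Uᗮ ∧ ∀ x ∈ A, ∀ y ∈ B, ⟪p, x⟫ + ⟪q, y⟫ < 0 := by
  set Δ : Submodule ℝ (E × E) := U.comap (.fst ℝ E E) ⊓ LinearMap.eqLocus (.fst ℝ E E) (.snd ℝ E E)
  have hU : IsClosed (U : Set E) := U.orthogonal_orthogonal ▸ Uᗮ.isClosed_orthogonal
  have hΔ : IsClosed (Δ : Set (E × E)) :=
    (hU.preimage continuous_fst).inter (isClosed_eq continuous_fst continuous_snd)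
  have disj : Disjoint (A ×ˢ B) (Δ : Set (E × E)) := by
    rw [Set.disjoint_left]
    rintro ⟨x, y⟩ ⟨hx, hy⟩ ⟨hxU, hxy : x = y⟩
    subst hxy
    exact (h ▸ ⟨⟨hx, hy⟩, hxU⟩ : x ∈ (∅ : Set E))
  obtain ⟨f, hfΔ, hfAB⟩ :=
    geometric_hahn_banach_compact_submodule (hA.prod hB) (hA'.prod hB') hΔ disj
  obtain ⟨p, q, hf⟩ := exists_inner_add_inner_eq f
  refine ⟨p, q, (U.mem_orthogonal _).2 fun u hu => ?_,
    fun x hx y hy => hf x y ▸ hfAB (x, y) ⟨hx, hy⟩⟩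
  rw [inner_add_right, real_inner_comm, real_inner_comm q, ← hf]
  exact hfΔ (u, u) ⟨hu, rfl⟩

theorem convexHull_inter_convexHull_inter_eq_empty {s t : Set E} {U : Submodule ℝ E}
    {a v w : E} (hv : v ∈ Uᗮ) (hw : w ∈ Uᗮ) (h : ∀ x ∈ s, ∀ y ∈ t, ⟪a + v, x⟫ < ⟪a + w, y⟫) :
    convexHull ℝ s ∩ convexHull ℝ t ∩ U = ∅ := by
  rw [Set.eq_empty_iff_forall_notMem]
  rintro z ⟨⟨hzs, hzt⟩, hzU⟩
  have := forall_lt_of_mem_convexHull (innerₛₗ ℝ (a + v)) (innerₛₗ ℝ (a + w)) h z hzs z hzt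
  simp [Submodule.inner_left_of_mem_orthogonal hzU hv,
    Submodule.inner_left_of_mem_orthogonal hzU hw] at this

end InnerProductSpace

theorem stmt_5 {n : ℕ} (K L : Set (EuclideanSpace ℝ (Fin n)))
    (hK : IsCompact K) (hL : IsCompact L) (U : Submodule ℝ (EuclideanSpace ℝ (Fin n))) :
    convexHull ℝ K ∩ convexHull ℝ L ∩ (U : Set (EuclideanSpace ℝ (Fin n))) = ∅ ↔
      ∃ a ∈ U, ∃ v ∈ Uᗮ, ∃ w ∈ Uᗮ,
        ∀ x ∈ K, ∀ y ∈ L, ⟪a + v, x⟫ < ⟪a + w, y⟫ := by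
  constructor
  · intro h
    obtain ⟨p, q, hpq, hsep⟩ := exists_inner_add_inner_neg_of_inter_eq_empty
      (convex_convexHull ℝ K) hK.convexHull (convex_convexHull ℝ L) hL.convexHull U h
    obtain ⟨a, ha, v, hv, w, hw, rfl, haw⟩ := exists_add_eq_add_eq_neg_of_add_mem_orthogonal U hpq
    refine ⟨a, ha, v, hv, w, hw, fun x hx y hy => ?_⟩
    have := hsep x (subset_convexHull ℝ K hx) y (subset_convexHull ℝ L hy)
    rw [haw, inner_neg_left]
    linarith
  · rintro ⟨a, -, v, hv, w, hw, hsep⟩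
    exact convexHull_inter_convexHull_inter_eq_empty hv hw hsep
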